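/- Let H₃(ℍ) be the hermitian 3×3 quaternionic matrices, and for X ∈ M₃(ℍ) define ρ(X) : H₃(ℍ) → H₃(ℍ) by ρ(X)(H) = X*H + H*Xᴴ. Then: (i) ρ(X) does map hermitian matrices to hermitian matrices; (ii) ρ is an injective ℝ-linear map and ρ([X,Y]) = [ρ(X), ρ(Y)] for all X,Y ∈ M₃(ℍ), i.e. ρ is an injective homomorphism of real Lie algebras from M₃(ℍ) (commutator bracket) into the endomorphisms of H₃(ℍ) (commutator bracket); (iii) the image of ρ is exactly the Lie subalgebra of endomorphisms of H₃(ℍ) generated by the Jordan multiplication operators L_A : H ↦ A*H + H*A for A ∈ H₃(ℍ) (the structure algebra of H₃(ℍ)); and (iv) this structure algebra is the internal direct sum of ℝ·id and ρ(sl(3,ℍ)), where sl(3,ℍ) = {X ∈ M₃(ℍ) : Re(tr X) = 0}. In particular the structure algebra of H₃(ℍ) is isomorphic to gl(3,ℍ), and its quotient by its centre is isomorphic to sl(3,ℍ). -/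

import Mathlib

open Matrix Quaternion

instance : StarModule ℝ ℍ[ℝ] := ⟨fun r q => by ext <;> simp⟩

attribute [local instance 100] LieRing.ofAssociativeRing

/-- The real vector space `H₃(ℍ)` of hermitian 3×3 quaternionic matrices. -/
noncomputable def herm3H : Submodule ℝ (Matrix (Fin 3) (Fin 3) ℍ[ℝ]) where
  carrier := {H | Hᴴ = H}
  add_mem' := by
    intro a b ha hb
    simp only [Set.mem_setOf_eq] at *
    rw [conjTranspose_add, ha, hb]
  zero_mem' := by simp [Set.mem_setOf_eq]
  smul_mem' := by
    intro r H hH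
    simp only [Set.mem_setOf_eq] at *
    rw [conjTranspose_smul, hH, star_trivial]

/-- The map `ρ(X) : H ↦ XH + HXᴴ`, an endomorphism of `H₃(ℍ)`. -/
noncomputable def rho (X : Matrix (Fin 3) (Fin 3) ℍ[ℝ]) : Module.End ℝ herm3H where
  toFun H :=
    ⟨X * H.1 + H.1 * Xᴴ, by
      have hH : (H.1)ᴴ = H.1 := H.2
      show (X * H.1 + H.1 * Xᴴ)ᴴ = X * H.1 + H.1 * Xᴴ
      rw [conjTranspose_add, conjTranspose_mul, conjTranspose_mul,
        conjTranspose_conjTranspose, hH, add_comm]⟩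
  map_add' := by
    intro H K
    apply Subtype.ext
    simp only [Submodule.coe_add, mul_add, add_mul]
    abel
  map_smul' := by
    intro r H
    apply Subtype.ext
    simp only [RingHom.id_apply, SetLike.val_smul, mul_smul_comm, smul_mul_assoc,
      smul_add]

/-- The Jordan multiplication operator `L_A : H ↦ AH + HA` on `H₃(ℍ)`, for
`A ∈ H₃(ℍ)`. -/
noncomputable def Lop (A : herm3H) : Module.End ℝ herm3H where
  toFun H :=
    ⟨A.1 * H.1 + H.1 * A.1, by
      have hA : (A.1)ᴴ = A.1 := A.2
      have hH : (H.1)ᴴ = H.1 := H.2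
      show (A.1 * H.1 + H.1 * A.1)ᴴ = A.1 * H.1 + H.1 * A.1
      rw [conjTranspose_add, conjTranspose_mul, conjTranspose_mul, hA, hH, add_comm]⟩
  map_add' := by
    intro H K
    apply Subtype.ext
    simp only [Submodule.coe_add, mul_add, add_mul]
    abel
  map_smul' := by
    intro r H
    apply Subtype.ext
    simp only [RingHom.id_apply, SetLike.val_smul, mul_smul_comm, smul_mul_assoc,
      smul_add]

/-- The structure algebra of `H₃(ℍ)`: the Lie subalgebra of endomorphisms of `H₃(ℍ)`
(with commutator bracket) generated by the Jordan multiplication operators `L_A`. -/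
noncomputable def StrH3 : LieSubalgebra ℝ (Module.End ℝ herm3H) :=
  LieSubalgebra.lieSpan ℝ (Module.End ℝ herm3H) (Set.range Lop)

/-!
`ρ` respects brackets by direct computation, and `ρ(A) = L_A` for hermitian `A`, so the structure
algebra is the image under `ρ` of the Lie algebra generated by the hermitian matrices. That Lie
algebra is all of `M₃(ℍ)`: an off-diagonal unit is `E_ij u = ½ (P + [E_ii, P])` with the hermitian
`P = E_ij u + E_ji ū`, and a diagonal one `E_ii (ab - ba)` is a combination of brackets of
off-diagonal ones, while `ℍ` is spanned by `1` and commutators.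

The same fact gives injectivity: if `ρ(Z) = 0`, then `H = 1` gives `Zᴴ = -Z`, so `Z` commutes
with every hermitian matrix, hence (its centralizer being a Lie subalgebra) with everything; thus
`Z` is a scalar from the centre `ℝ` of `ℍ`, and `Zᴴ = -Z` forces `Z = 0`. Finally
`ρ(c • 1) = 2c • id`, and splitting off `(Re tr X / 3) • 1` gives the decomposition
`ℝ • id ⊕ ρ(sl(3, ℍ))`.
-/

namespace Quaternion

theorem exists_eq_coe_re_add_commutators (u : ℍ[ℝ]) : ∃ a b c d e f : ℍ[ℝ],
    u = u.re + (a * b - b * a) + (c * d - d * c) + (e * f - f * e) := by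
  -- `show` keeps the type `ℍ[ℝ]` (an anonymous constructor alone has type
  -- `QuaternionAlgebra ℝ (-1) 0 (-1)`, on which the `Quaternion` simp lemmas do not fire),
  -- and `-zeta` keeps the resulting `have` until those lemmas have been applied.
  let i : ℍ[ℝ] := show ℍ[ℝ] from ⟨0, 1, 0, 0⟩
  let j : ℍ[ℝ] := show ℍ[ℝ] from ⟨0, 0, 1, 0⟩
  let k : ℍ[ℝ] := show ℍ[ℝ] from ⟨0, 0, 0, 1⟩
  refine ⟨(u.imI / 2) • j, k, (u.imJ / 2) • k, i, (u.imK / 2) • i, j, ?_⟩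
  ext <;> simp -zeta only [re_add, imI_add, imJ_add, imK_add, re_sub, imI_sub, imJ_sub, imK_sub,
    re_smul, imI_smul, imJ_smul, imK_smul, re_mul, imI_mul, imJ_mul, imK_mul] <;>
    simp [i, j, k]

theorem eq_coe_re_of_mem_center {q : ℍ[ℝ]} (hq : q ∈ Set.center ℍ[ℝ]) : q = q.re := by
  rw [Semigroup.mem_center_iff] at hq
  have hi := hq (show ℍ[ℝ] from ⟨0, 1, 0, 0⟩)
  have hj := hq (show ℍ[ℝ] from ⟨0, 0, 1, 0⟩)
  simp -zeta only [Quaternion.ext_iff, re_mul, imI_mul, imJ_mul, imK_mul] at hi hj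
  ext <;> simp at hi hj ⊢ <;> linarith

end Quaternion

namespace Matrix

variable {ι : Type*} [DecidableEq ι]

theorem isHermitian_single_add_single {α : Type*} [AddCommMonoid α] [StarAddMonoid α]
    (i j : ι) (a : α) : (single i j a + single j i (star a)).IsHermitian := by
  rw [IsHermitian, conjTranspose_add, conjTranspose_single, conjTranspose_single, star_star,
    add_comm]

theorem isHermitian_single_self {α : Type*} [AddMonoid α] [StarAddMonoid α] (i : ι) {a : α}
    (ha : IsSelfAdjoint a) : (single i i a).IsHermitian := by
  rw [IsHermitian, conjTranspose_single, ha.star_eq]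

variable [Fintype ι]

theorem single_eq_half_smul_add_lie {i j : ι} (hij : i ≠ j) (u : ℍ[ℝ]) :
    single i j u = (1 / 2 : ℝ) • ((single i j u + single j i (star u)) +
      ⁅single i i (1 : ℍ[ℝ]), single i j u + single j i (star u)⁆) := by
  simp only [Ring.lie_def, mul_add, add_mul, single_mul_single_same,
    single_mul_single_of_ne _ i i j hij, single_mul_single_of_ne _ i j i hij.symm, one_mul, mul_one]
  module

theorem lie_single_sub_lie_single (i j : ι) (a b : ℍ[ℝ]) :
    ⁅single i j a, single j i b⁆ - ⁅single i j (b * a), single j i 1⁆ =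
      single i i (a * b - b * a) := by
  simp only [Ring.lie_def, single_mul_single_same, mul_one, one_mul]
  rw [sub_sub_sub_cancel_right]
  exact (map_sub (singleAddMonoidHom (α := ℍ[ℝ]) i i) _ _).symm

theorem lieSpan_isHermitian_eq_top [Nontrivial ι] :
    LieSubalgebra.lieSpan ℝ (Matrix ι ι ℍ[ℝ]) {X | X.IsHermitian} = ⊤ := by
  set L := LieSubalgebra.lieSpan ℝ (Matrix ι ι ℍ[ℝ]) {X | X.IsHermitian}
  have hherm {X : Matrix ι ι ℍ[ℝ]} (hX : X.IsHermitian) : X ∈ L :=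
    LieSubalgebra.subset_lieSpan hX
  have hoff {i j : ι} (hij : i ≠ j) (u : ℍ[ℝ]) : single i j u ∈ L := by
    rw [single_eq_half_smul_add_lie hij]
    have hP := hherm (isHermitian_single_add_single i j u)
    have h1 := hherm (isHermitian_single_self i (IsSelfAdjoint.one _))
    exact L.smul_mem _ (L.add_mem hP (L.lie_mem h1 hP))
  have hcomm (i : ι) (a b : ℍ[ℝ]) : single i i (a * b - b * a) ∈ L := by
    obtain ⟨j, hji⟩ := exists_ne i
    rw [← lie_single_sub_lie_single i j]
    exact L.sub_mem (L.lie_mem (hoff hji.symm a) (hoff hji b))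
      (L.lie_mem (hoff hji.symm _) (hoff hji 1))
  have hdiag (i : ι) (u : ℍ[ℝ]) : single i i u ∈ L := by
    obtain ⟨a, b, c, d, e, f, hu⟩ := u.exists_eq_coe_re_add_commutators
    rw [hu, single_add, single_add, single_add]
    have hre := hherm (isHermitian_single_self i (star_coe u.re))
    exact L.add_mem (L.add_mem (L.add_mem hre (hcomm i a b)) (hcomm i c d)) (hcomm i e f)
  refine eq_top_iff.mpr fun X _ => ?_
  rw [matrix_eq_sum_single X]
  refine L.sum_mem fun i _ => L.sum_mem fun j _ => ?_
  obtain rfl | hij := eq_or_ne i j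
  exacts [hdiag i _, hoff hij _]

theorem mem_center_of_forall_isHermitian_commute [Nontrivial ι] {Z : Matrix ι ι ℍ[ℝ]}
    (hZ : ∀ H : Matrix ι ι ℍ[ℝ], H.IsHermitian → Commute Z H) :
    Z ∈ Set.center (Matrix ι ι ℍ[ℝ]) := by
  have hle : LieSubalgebra.lieSpan ℝ (Matrix ι ι ℍ[ℝ]) {X | X.IsHermitian} ≤
      lieSubalgebraOfSubalgebra ℝ _ (Subalgebra.centralizer ℝ {Z}) :=
    LieSubalgebra.lieSpan_le.mpr fun H hH =>
      (Subalgebra.mem_centralizer_iff ℝ).mpr fun _ hg => (Set.mem_singleton_iff.mp hg) ▸ hZ H hH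
  rw [lieSpan_isHermitian_eq_top] at hle
  refine Semigroup.mem_center_iff.mpr fun Y => ?_
  exact (Subalgebra.mem_centralizer_iff ℝ).mp (hle (LieSubalgebra.mem_top Y)) Z rfl |>.symm

theorem exists_eq_scalar_of_forall_isHermitian_commute [Nontrivial ι] {Z : Matrix ι ι ℍ[ℝ]}
    (hZ : ∀ H : Matrix ι ι ℍ[ℝ], H.IsHermitian → Commute Z H) :
    ∃ r : ℝ, Z = scalar ι (r : ℍ[ℝ]) := by
  obtain ⟨q, hq, rfl⟩ : Z ∈ scalar ι '' Set.center ℍ[ℝ] :=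
    center_eq_scalar_image (n := ι) (α := ℍ[ℝ]) ▸ mem_center_of_forall_isHermitian_commute hZ
  exact ⟨q.re, by rw [← Quaternion.eq_coe_re_of_mem_center hq]⟩

theorem eq_zero_of_forall_isHermitian_mul_add_mul_conjTranspose [Nontrivial ι]
    {Z : Matrix ι ι ℍ[ℝ]} (hZ : ∀ H : Matrix ι ι ℍ[ℝ], H.IsHermitian → Z * H + H * Zᴴ = 0) :
    Z = 0 := by
  have hskew : Zᴴ = -Z := by
    simpa [eq_neg_iff_add_eq_zero, add_comm] using hZ 1 isHermitian_one
  obtain ⟨r, rfl⟩ := exists_eq_scalar_of_forall_isHermitian_commute fun H hH => by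
    simpa [Commute, SemiconjBy, hskew, ← sub_eq_add_neg, sub_eq_zero] using hZ H hH
  obtain ⟨i⟩ := (inferInstance : Nonempty ι)
  have hr : r + r = 0 := Quaternion.coe_injective <| by
    simpa using congrFun (congrFun (hZ 1 isHermitian_one) i) i
  obtain rfl : r = 0 := by linarith
  simp

theorem re_trace_smul_one (c : ℝ) :
    (c • 1 : Matrix ι ι ℍ[ℝ]).trace.re = Fintype.card ι * c := by
  simp [trace_smul, trace_one, mul_comm]

end Matrix

theorem rho_apply_coe (X : Matrix (Fin 3) (Fin 3) ℍ[ℝ]) (H : herm3H) :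
    (rho X H : Matrix (Fin 3) (Fin 3) ℍ[ℝ]) = X * H + H * Xᴴ :=
  rfl

theorem rho_add (X Y : Matrix (Fin 3) (Fin 3) ℍ[ℝ]) : rho (X + Y) = rho X + rho Y := by
  ext H : 2
  simp only [rho_apply_coe, LinearMap.add_apply, Submodule.coe_add, conjTranspose_add]
  noncomm_ring

theorem rho_smul (r : ℝ) (X : Matrix (Fin 3) (Fin 3) ℍ[ℝ]) : rho (r • X) = r • rho X := by
  ext H : 2
  simp only [rho_apply_coe, LinearMap.smul_apply, SetLike.val_smul, conjTranspose_smul,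
    star_trivial, smul_mul_assoc, mul_smul_comm, smul_add]

theorem rho_mul_sub_mul (X Y : Matrix (Fin 3) (Fin 3) ℍ[ℝ]) :
    rho (X * Y - Y * X) = rho X * rho Y - rho Y * rho X := by
  ext H : 2
  simp only [rho_apply_coe, LinearMap.sub_apply, Module.End.mul_apply, Submodule.coe_sub,
    conjTranspose_sub, conjTranspose_mul]
  noncomm_ring

noncomputable def rhoLieHom : Matrix (Fin 3) (Fin 3) ℍ[ℝ] →ₗ⁅ℝ⁆ Module.End ℝ herm3H where
  toFun := rho
  map_add' := rho_add
  map_smul' := rho_smul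
  map_lie' {X Y} := by simp only [Ring.lie_def, rho_mul_sub_mul]

theorem rho_injective : Function.Injective rho := by
  refine (injective_iff_map_eq_zero rhoLieHom).mpr fun Z hZ => ?_
  refine eq_zero_of_forall_isHermitian_mul_add_mul_conjTranspose fun H hH => ?_
  exact congrArg Subtype.val (LinearMap.congr_fun hZ ⟨H, hH⟩)

theorem Lop_eq_rho (A : herm3H) : Lop A = rho A := by
  ext H : 2
  show A * H + H * A = A * H + H * (A : Matrix (Fin 3) (Fin 3) ℍ[ℝ])ᴴ
  rw [A.2]

theorem StrH3_eq_range : StrH3 = rhoLieHom.range := by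
  have hgen : Set.range Lop = rhoLieHom '' {X | X.IsHermitian} := by
    ext D
    constructor
    · rintro ⟨A, rfl⟩
      exact ⟨A, A.2, (Lop_eq_rho A).symm⟩
    · rintro ⟨X, hX, rfl⟩
      exact ⟨⟨X, hX⟩, Lop_eq_rho _⟩
  rw [StrH3, hgen, ← LieSubalgebra.map_lieSpan, lieSpan_isHermitian_eq_top,
    LieHom.range_eq_map]

theorem rho_smul_one (c : ℝ) : rho (c • 1) = (2 * c) • 1 := by
  ext H : 2
  simp only [rho_apply_coe, conjTranspose_smul, star_trivial, conjTranspose_one, smul_mul_assoc,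
    mul_smul_comm, one_mul, mul_one, LinearMap.smul_apply, Module.End.one_apply, SetLike.val_smul]
  module

theorem rho_eq_smul_one_add_rho_iff (X Y : Matrix (Fin 3) (Fin 3) ℍ[ℝ]) (r : ℝ) :
    rho X = r • 1 + rho Y ↔ X = (r / 2) • 1 + Y := by
  rw [← rho_injective.eq_iff, rho_add, rho_smul_one, mul_div_cancel₀ r two_ne_zero]

theorem existsUnique_re_trace_eq_zero_and_rho_eq (X : Matrix (Fin 3) (Fin 3) ℍ[ℝ]) :
    ∃! p : ℝ × Matrix (Fin 3) (Fin 3) ℍ[ℝ],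
      p.2.trace.re = 0 ∧ rho X = p.1 • (1 : Module.End ℝ herm3H) + rho p.2 := by
  set c := X.trace.re / 3
  refine ⟨(2 * c, X - c • 1), ⟨?_, ?_⟩, ?_⟩
  · rw [trace_sub, re_sub, re_trace_smul_one, Fintype.card_fin]
    ring
  · rw [rho_eq_smul_one_add_rho_iff]
    module
  · rintro ⟨r, Y⟩ ⟨hY, hX⟩
    rw [rho_eq_smul_one_add_rho_iff] at hX
    have hc : c = r / 2 := by
      simp only [c, hX, trace_add, re_add, re_trace_smul_one, hY, Fintype.card_fin]
      ring
    rw [hc, hX, Prod.mk.injEq]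
    exact ⟨by ring, by abel⟩

/-- `ρ(X)(H) = XH + HXᴴ` (i) maps hermitian matrices to hermitian matrices; (ii) is an
injective homomorphism of real Lie algebras from `gl(3,ℍ) = M₃(ℍ)` into the
endomorphisms of `H₃(ℍ)`; (iii) has image exactly the structure algebra of `H₃(ℍ)`
(the Lie algebra generated by the Jordan multiplications `L_A`); and (iv) the structure
algebra is the internal direct sum of `ℝ·id` and `ρ(sl(3,ℍ))`. -/
theorem statement19 :
    (∀ (X H : Matrix (Fin 3) (Fin 3) ℍ[ℝ]), Hᴴ = H →
        (X * H + H * Xᴴ)ᴴ = X * H + H * Xᴴ)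
    ∧ (Function.Injective rho
        ∧ (∀ X Y, rho (X + Y) = rho X + rho Y)
        ∧ (∀ (r : ℝ) X, rho (r • X) = r • rho X)
        ∧ (∀ X Y, rho (X * Y - Y * X) = rho X * rho Y - rho Y * rho X))
    ∧ ((StrH3 : Set (Module.End ℝ herm3H)) = Set.range rho)
    ∧ (∀ D : Module.End ℝ herm3H, D ∈ StrH3 ↔
        ∃! p : ℝ × Matrix (Fin 3) (Fin 3) ℍ[ℝ],
          (p.2.trace).re = 0 ∧ D = p.1 • (1 : Module.End ℝ herm3H) + rho p.2) := by
  have hStr : (StrH3 : Set (Module.End ℝ herm3H)) = Set.range rho := by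
    rw [StrH3_eq_range, LieHom.coe_range]
    rfl
  refine ⟨fun X H hH => ?_, ⟨rho_injective, rho_add, rho_smul, rho_mul_sub_mul⟩, hStr,
    fun D => ?_⟩
  · rw [conjTranspose_add, conjTranspose_mul, conjTranspose_mul, conjTranspose_conjTranspose, hH,
      add_comm]
  · rw [← SetLike.mem_coe, hStr]
    constructor
    · rintro ⟨X, rfl⟩
      exact existsUnique_re_trace_eq_zero_and_rho_eq X
    · rintro ⟨⟨r, Y⟩, ⟨-, rfl⟩, -⟩
      exact ⟨(r / 2) • 1 + Y, (rho_eq_smul_one_add_rho_iff _ Y r).mpr rfl⟩
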